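/- arXiv:2401.09344 — 7 statements merged into one kernel-verified Lean document; each statement's English description precedes it below -/
import Mathlib

section
/- If a topological space X contains a nontrivial finite open set U (i.e., U is finite, nonempty, and U ≠ X), then there is no hypermixing map on X. -/
/-! The sets `⋂ n ≥ i, f^[n] '' U` increase with `i` and each lies in `f^[i] '' U`, so has at most
`|U|` points. A finite subset of their union lies in one of them, hence for finite `U` the union
cannot contain `U` together with a point outside `U`. -/

open Set

theorem monotone_iInter_ge_image_iterate {α : Type*} (f : α → α) (U : Set α) :
    Monotone fun i : ℕ => ⋂ n ≥ i, f^[n] '' U :=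
  fun _ _ hij => biInter_mono (fun _ hn => hij.trans hn) fun _ _ => subset_rfl

theorem ncard_le_of_subset_iUnion_iInter_image_iterate {α : Type*} (f : α → α) {U s : Set α}
    (hU : U.Finite) (hs : s.Finite) (hsub : s ⊆ ⋃ i : ℕ, ⋂ n ≥ i, f^[n] '' U) :
    s.ncard ≤ U.ncard := by
  obtain ⟨N, hN⟩ := (monotone_iInter_ge_image_iterate f U).directed_le
    |>.exists_mem_subset_of_finset_subset_biUnion (s := hs.toFinset) (by simpa using hsub)
  rw [hs.coe_toFinset] at hN
  calc s.ncard ≤ (f^[N] '' U).ncard :=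
        ncard_le_ncard (hN.trans (iInter₂_subset N le_rfl)) (hU.image _)
    _ ≤ U.ncard := ncard_image_le hU

theorem stmt0 {X : Type*} [TopologicalSpace X] (U : Set X)
    (hUopen : IsOpen U) (hUfin : U.Finite) (hUne : U.Nonempty) (hUne' : U ≠ Set.univ) :
    ¬ ∃ f : X → X, ∀ V : Set X, IsOpen V → V.Nonempty →
      (⋃ i : ℕ, ⋂ n ≥ i, f^[n] '' V) = Set.univ := by
  rintro ⟨f, hf⟩
  obtain ⟨x, hx⟩ := (ne_univ_iff_exists_notMem U).mp hUne'
  have hcard := ncard_le_of_subset_iUnion_iInter_image_iterate f hUfin (hUfin.insert x)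
    (hf U hUopen hUne ▸ subset_univ _)
  rw [ncard_insert_of_notMem hx hUfin] at hcard
  omega
end

section
/- If f : X → X is a supermixing map on a topological space X, then f^p is supermixing for every integer p ≥ 2. -/
def eventualImage {X : Type*} (f : X → X) (U : Set X) : Set X :=
  ⋃ i : ℕ, ⋂ n ≥ i, f^[n] '' U

theorem eventualImage_subset_eventualImage_iterate {X : Type*} (f : X → X) (U : Set X)
    {p : ℕ} (hp : 0 < p) : eventualImage f U ⊆ eventualImage f^[p] U := by
  refine Set.iUnion_mono fun i x hx => Set.mem_iInter₂.2 fun n hn => ?_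
  rw [← Function.iterate_mul]
  exact Set.mem_iInter₂.1 hx (p * n) (hn.trans (Nat.le_mul_of_pos_left n hp))

theorem stmt1 {X : Type*} [TopologicalSpace X] (f : X → X)
    (hf : ∀ U : Set X, IsOpen U → U.Nonempty → Dense (⋃ i : ℕ, ⋂ n ≥ i, f^[n] '' U))
    (p : ℕ) (hp : 2 ≤ p) :
    ∀ U : Set X, IsOpen U → U.Nonempty → Dense (⋃ i : ℕ, ⋂ n ≥ i, (f^[p])^[n] '' U) :=
  fun U hU hne => (hf U hU hne).mono (eventualImage_subset_eventualImage_iterate f U (by omega))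
end

section
/- If f : X → X is a hypermixing map on a topological space X, then f^p is hypermixing for every integer p ≥ 2. -/
theorem stmt2 {X : Type*} [TopologicalSpace X] (f : X → X)
    (hf : ∀ U : Set X, IsOpen U → U.Nonempty → (⋃ i : ℕ, ⋂ n ≥ i, f^[n] '' U) = Set.univ)
    (p : ℕ) (hp : 2 ≤ p) :
    ∀ U : Set X, IsOpen U → U.Nonempty → (⋃ i : ℕ, ⋂ n ≥ i, (f^[p])^[n] '' U) = Set.univ := by
  intro U hU hUne
  apply Set.eq_univ_of_forall
  intro x
  have hx : x ∈ ⋃ i : ℕ, ⋂ n ≥ i, f^[n] '' U := (hf U hU hUne) ▸ Set.mem_univ x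
  obtain ⟨i, hi⟩ := Set.mem_iUnion.mp hx
  simp only [Set.mem_iInter] at hi
  refine Set.mem_iUnion.mpr ⟨i, ?_⟩
  simp only [Set.mem_iInter]
  intro n hn
  rw [← Function.iterate_mul]
  exact hi (p * n) (le_trans hn (Nat.le_mul_of_pos_left n (by omega)))
end

section
/- Let X be a topological space containing a nonempty open set U whose closure is not all of X. Then every strongly topologically transitive map f : X → X is surjective. -/
/-! A point outside the range of `f` is reached only by the zeroth iterate, so strong
transitivity puts it in every nonempty open set. A space with two disjoint nonempty open sets,
such as `U` and the complement of its closure, has no such point. -/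

open Set Function

def IsStronglyTopTransitive {X : Type*} [TopologicalSpace X] (f : X → X) : Prop :=
  ∀ V : Set X, IsOpen V → V.Nonempty → ⋃ n : ℕ, f^[n] '' V = univ

lemma mem_of_mem_iterate_image_of_notMem_range {X : Type*} {f : X → X} {V : Set X} {y : X}
    {n : ℕ} (hy : y ∉ range f) (hyn : y ∈ f^[n] '' V) : y ∈ V := by
  obtain ⟨x, hx, rfl⟩ := hyn
  cases n with
  | zero => exact hx
  | succ n => exact absurd ⟨f^[n] x, (iterate_succ_apply' f n x).symm⟩ hy

namespace IsStronglyTopTransitive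

variable {X : Type*} [TopologicalSpace X] {f : X → X}

lemma mem_of_notMem_range (hf : IsStronglyTopTransitive f) {V : Set X} (hV : IsOpen V)
    (hVne : V.Nonempty) {y : X} (hy : y ∉ range f) : y ∈ V := by
  obtain ⟨n, hyn⟩ := mem_iUnion.1 (hf V hV hVne ▸ mem_univ y)
  exact mem_of_mem_iterate_image_of_notMem_range hy hyn

theorem surjective_of_disjoint (hf : IsStronglyTopTransitive f) {U V : Set X}
    (hU : IsOpen U) (hV : IsOpen V) (hUne : U.Nonempty) (hVne : V.Nonempty)
    (hUV : Disjoint U V) : Surjective f := by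
  intro y
  by_contra hy
  exact hUV.notMem_of_mem_left (hf.mem_of_notMem_range hU hUne hy)
    (hf.mem_of_notMem_range hV hVne hy)

end IsStronglyTopTransitive

theorem stmt4 {X : Type*} [TopologicalSpace X] (U : Set X)
    (hUopen : IsOpen U) (hUne : U.Nonempty) (hUcl : closure U ≠ Set.univ)
    (f : X → X)
    (hf : ∀ V : Set X, IsOpen V → V.Nonempty → (⋃ n : ℕ, f^[n] '' V) = Set.univ) :
    Function.Surjective f :=
  IsStronglyTopTransitive.surjective_of_disjoint hf hUopen isClosed_closure.isOpen_compl hUne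
    (nonempty_compl.2 hUcl) (disjoint_compl_right_iff_subset.2 subset_closure)
end

section
/- Let X be a topological space containing a nonempty open set U whose closure is not all of X. Then no hypermixing map on X is injective. -/
open Function Set

theorem Function.Injective.disjoint_iUnion_iInter_iterate_image {α : Type*} {f : α → α}
    (hf : Injective f) {U W : Set α} (hUW : Disjoint U W) :
    Disjoint (⋃ i : ℕ, ⋂ n ≥ i, f^[n] '' U) (⋃ j : ℕ, ⋂ n ≥ j, f^[n] '' W) := by
  refine disjoint_iUnion_left.2 fun i => disjoint_iUnion_right.2 fun j => ?_
  have hU : ⋂ n ≥ i, f^[n] '' U ⊆ f^[max i j] '' U := biInter_subset_of_mem (le_max_left i j)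
  have hW : ⋂ n ≥ j, f^[n] '' W ⊆ f^[max i j] '' W := biInter_subset_of_mem (le_max_right i j)
  exact ((disjoint_image_iff (hf.iterate _)).2 hUW).mono hU hW

theorem stmt8 {X : Type*} [TopologicalSpace X] (U : Set X)
    (hUopen : IsOpen U) (hUne : U.Nonempty) (hUcl : closure U ≠ Set.univ)
    (f : X → X)
    (hf : ∀ V : Set X, IsOpen V → V.Nonempty → (⋃ i : ℕ, ⋂ n ≥ i, f^[n] '' V) = Set.univ) :
    ¬ Function.Injective f := by
  intro hinj
  have hdisj : Disjoint U (closure U)ᶜ := disjoint_compl_right.mono_right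
    (compl_subset_compl.2 subset_closure)
  have key := hinj.disjoint_iUnion_iInter_iterate_image hdisj
  rw [hf U hUopen hUne, hf _ isClosed_closure.isOpen_compl (nonempty_compl.2 hUcl)] at key
  obtain ⟨x, -⟩ := hUne
  exact key.ne_of_mem (mem_univ x) (mem_univ x) rfl
end

section
/- Every continuous supermixing map on a compact Hausdorff space is surjective. -/
open Set

theorem Continuous.surjective_of_denseRange {X Y : Type*} [TopologicalSpace X]
    [TopologicalSpace Y] [CompactSpace X] [T2Space Y] {f : X → Y} (hf : Continuous f)
    (hd : DenseRange f) : Function.Surjective f :=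
  fun y => (isCompact_range hf).isClosed.closure_subset (hd y)

theorem iUnion_iInter_iterate_image_subset_range {X : Type*} (f : X → X) (U : Set X) :
    ⋃ i : ℕ, ⋂ n ≥ i, f^[n] '' U ⊆ range f := by
  refine iUnion_subset fun i => ?_
  calc ⋂ n ≥ i, f^[n] '' U ⊆ f^[i + 1] '' U := biInter_subset_of_mem (Nat.le_succ i)
    _ ⊆ range f := by rw [Function.iterate_succ', image_comp]; exact image_subset_range _ _

theorem stmt9 {X : Type*} [TopologicalSpace X] [CompactSpace X] [T2Space X] (f : X → X)
    (hcont : Continuous f)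
    (hf : ∀ U : Set X, IsOpen U → U.Nonempty → Dense (⋃ i : ℕ, ⋂ n ≥ i, f^[n] '' U)) :
    Function.Surjective f := by
  intro x
  have : Nonempty X := ⟨x⟩
  have hdense : DenseRange f :=
    (hf univ isOpen_univ univ_nonempty).mono (iUnion_iInter_iterate_image_subset_range f univ)
  exact hcont.surjective_of_denseRange hdense x
end

section
/- Let X be a topological space and f : X → X a continuous hypertransitive map. Then f is supermixing if and only if ⋃_{k=0}^∞ ⋂_{n=k}^∞ f^n(U) ≠ ∅ for every nonempty open set U ⊆ X. -/
/-!
The set `⋃ k, ⋂ n ≥ k, f^[n] '' U` is forward invariant under `f`, so it contains the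
whole orbit of each of its points; when every orbit is dense, one point suffices.
-/

open Set

theorem mapsTo_iUnion_iInter_image_iterate {X : Type*} (f : X → X) (U : Set X) :
    MapsTo f (⋃ k : ℕ, ⋂ n ≥ k, f^[n] '' U) (⋃ k : ℕ, ⋂ n ≥ k, f^[n] '' U) := by
  intro x hx
  obtain ⟨k, hk⟩ := mem_iUnion.mp hx
  refine mem_iUnion.mpr ⟨k + 1, mem_iInter₂.mpr fun n hn => ?_⟩
  obtain ⟨m, rfl⟩ : ∃ m, n = m + 1 := ⟨n - 1, by omega⟩
  obtain ⟨u, hu, rfl⟩ := mem_iInter₂.mp hk m (by omega)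
  exact ⟨u, hu, Function.iterate_succ_apply' f m u⟩

theorem Dense.of_mapsTo_of_dense_orbit {X : Type*} [TopologicalSpace X] {f : X → X}
    {S : Set X} (hS : MapsTo f S S) {x : X} (hx : x ∈ S)
    (hdense : Dense (range fun n : ℕ => f^[n] x)) : Dense S :=
  hdense.mono <| range_subset_iff.mpr fun n => hS.iterate n hx

theorem stmt17_general {X : Type*} [TopologicalSpace X] (f : X → X)
    (hf : ∀ x : X, Dense (Set.range fun n : ℕ => f^[n] x)) :
    (∀ U : Set X, IsOpen U → U.Nonempty → Dense (⋃ k : ℕ, ⋂ n ≥ k, f^[n] '' U)) ↔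
      ∀ U : Set X, IsOpen U → U.Nonempty → (⋃ k : ℕ, ⋂ n ≥ k, f^[n] '' U).Nonempty := by
  refine ⟨fun h U hU hne => ?_, fun h U hU hne => ?_⟩
  · have : Nonempty X := ⟨hne.some⟩
    exact (h U hU hne).nonempty
  · obtain ⟨x, hx⟩ := h U hU hne
    exact Dense.of_mapsTo_of_dense_orbit (mapsTo_iUnion_iInter_image_iterate f U) hx (hf x)

theorem stmt17 {X : Type*} [TopologicalSpace X] (f : X → X) (hcont : Continuous f)
    (hf : ∀ x : X, Dense (Set.range fun n : ℕ => f^[n] x)) :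
    (∀ U : Set X, IsOpen U → U.Nonempty → Dense (⋃ k : ℕ, ⋂ n ≥ k, f^[n] '' U)) ↔
      ∀ U : Set X, IsOpen U → U.Nonempty → (⋃ k : ℕ, ⋂ n ≥ k, f^[n] '' U).Nonempty :=
  stmt17_general f hf
end
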